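/- arXiv:math/0306253 — 3 statements merged into one kernel-verified Lean document; each statement's English description precedes it below -/
import Mathlib

section
/- For every n ≥ 1, in MvPolynomial (Fin n) (ZMod 2) one has the Moore permanent formula (Q_0 ∘ Q_1 ∘ ⋯ ∘ Q_{n-2}) (∏_{j : Fin n} X j) = ∑_{π ∈ Equiv.Perm (Fin n)} ∏_{i : Fin n} (X (π i)) ^ (2 ^ (i : ℕ)), where the composite has n − 1 factors (and is the identity when n = 1). (This computes the polynomial realization of the element ω = Q₀⋯Q_{n−2} ι_n of the paper's Lemma 2, corresponding to u ∧ u² ∧ ⋯ ∧ u^{2^{n-1}} in Λⁿ(F(1)).) -/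
open MvPolynomial

/-- The `i`-th Milnor derivation `Q_i` on `𝔽₂[x_j : j ∈ σ]`: the unique
`𝔽₂`-linear derivation with `Q_i (X j) = (X j) ^ (2 ^ (i + 1))`. -/
noncomputable def Q (σ : Type*) (i : ℕ) :
    MvPolynomial σ (ZMod 2) →ₗ[ZMod 2] MvPolynomial σ (ZMod 2) :=
  (MvPolynomial.mkDerivation (ZMod 2)
    fun j => (MvPolynomial.X j : MvPolynomial σ (ZMod 2)) ^ (2 ^ (i + 1))).toLinearMap

/-
Over `𝔽₂` every Milnor derivation kills squares, so `Q_c (p² q) = p² Q_c q`. Peeling off the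
outermost factor, one shows by induction on `r` that `Q_c ∘ Q_{c+1} ∘ ⋯ ∘ Q_{c+r-1}` sends
`x_1 ⋯ x_n` to the sum, over injective `e : Fin r → σ`, of
`∏_i x_{e i}^{2^{c+i+1}} · ∏_{j ∉ im e} x_j`: the first factor for `c + 1` is the square of the
one for `c`, so `Q_c` only acts on the square-free part, where it promotes one variable `j` to the
new entry `e 0` with exponent `2^{c+1}`. For `n - 1` factors the complement of `im e` is a single
variable, and prepending it to `e` gives a permutation of `Fin n`.
-/

open Finset

namespace Derivation

variable {R A M : Type*} [CommSemiring R] [CommSemiring A] [AddCommMonoid M] [Algebra R A]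
  [Module A M] [Module R M]

theorem leibniz_finset_prod {ι : Type*} [DecidableEq ι] (D : Derivation R A M) (s : Finset ι)
    (f : ι → A) : D (∏ i ∈ s, f i) = ∑ i ∈ s, (∏ j ∈ s.erase i, f j) • D (f i) := by
  induction s using Finset.induction_on with
  | empty => simp
  | insert a s ha ih =>
    rw [prod_insert ha, leibniz, ih, sum_insert ha, erase_insert ha, smul_sum, add_comm]
    congr 1
    refine sum_congr rfl fun i hi => ?_
    rw [erase_insert_of_ne (ne_of_mem_of_not_mem hi ha).symm, prod_insert (by simp [ha]),
      mul_smul]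

end Derivation

theorem Derivation.map_sq_mul {R A : Type*} [CommSemiring R] [CommRing A] [Algebra R A]
    [CharP A 2] (D : Derivation R A A) (a b : A) : D (a ^ 2 * b) = a ^ 2 * D b := by
  rw [leibniz, leibniz_pow, two_nsmul, CharTwo.add_self_eq_zero, smul_zero, add_zero, smul_eq_mul]

theorem Fin.image_cons_univ {α : Type*} [DecidableEq α] {r : ℕ} (a : α) (f : Fin r → α) :
    univ.image (Fin.cons a f : Fin (r + 1) → α) = insert a (univ.image f) := by
  apply Finset.coe_injective
  push_cast
  simp [Fin.range_cons]

theorem sum_embedding_fin_succ {σ M : Type*} [Fintype σ] [DecidableEq σ] [AddCommMonoid M] {r : ℕ}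
    (F : (Fin (r + 1) → σ) → M) :
    ∑ e : Fin (r + 1) ↪ σ, F e = ∑ e : Fin r ↪ σ, ∑ j ∈ (univ.image e)ᶜ, F (Fin.cons j e) := by
  rw [← (Equiv.embeddingFinSucc r σ).symm.sum_comp, Fintype.sum_sigma]
  refine sum_congr rfl fun e _ => ?_
  simp only [Equiv.coe_embeddingFinSucc_symm]
  convert (sum_subtype (univ.image e)ᶜ (p := (· ∉ Set.range e)) (fun j => by simp)
    fun j => F (Fin.cons j e)).symm

section Milnor

variable (σ : Type*)

theorem Q_apply (i : ℕ) (p : MvPolynomial σ (ZMod 2)) :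
    Q σ i p = mkDerivation (ZMod 2) (fun j => (X j : MvPolynomial σ (ZMod 2)) ^ 2 ^ (i + 1)) p :=
  rfl

theorem Q_sq_mul (i : ℕ) (p q : MvPolynomial σ (ZMod 2)) :
    Q σ i (p ^ 2 * q) = p ^ 2 * Q σ i q := by
  simp only [Q_apply]
  exact Derivation.map_sq_mul _ p q

theorem Q_prod_X [DecidableEq σ] (i : ℕ) (s : Finset σ) :
    Q σ i (∏ j ∈ s, X j) = ∑ j ∈ s, X j ^ 2 ^ (i + 1) * ∏ k ∈ s.erase j, X k := by
  simp only [Q_apply, Derivation.leibniz_finset_prod, mkDerivation_X, smul_eq_mul, mul_comm]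

noncomputable def milnorComposite (c r : ℕ) :
    MvPolynomial σ (ZMod 2) →ₗ[ZMod 2] MvPolynomial σ (ZMod 2) :=
  (List.ofFn fun k : Fin r => Q σ (c + k)).foldr (· ∘ₗ ·) LinearMap.id

theorem milnorComposite_succ (c r : ℕ) :
    milnorComposite σ c (r + 1) = Q σ c ∘ₗ milnorComposite σ (c + 1) r := by
  simp only [milnorComposite, List.ofFn_succ, List.foldr_cons, Fin.val_zero, add_zero, Fin.val_succ,
    add_assoc, add_comm 1]

variable [Fintype σ] [DecidableEq σ]

noncomputable def milnorTerm {r : ℕ} (c : ℕ) (f : Fin r → σ) : MvPolynomial σ (ZMod 2) :=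
  (∏ i, X (f i) ^ 2 ^ (c + i + 1)) * ∏ j ∈ (univ.image f)ᶜ, X j

theorem Q_milnorTerm {r : ℕ} (c : ℕ) (f : Fin r → σ) :
    Q σ c (milnorTerm σ (c + 1) f) = ∑ j ∈ (univ.image f)ᶜ, milnorTerm σ c (Fin.cons j f) := by
  have hsq : ∏ i, (X (f i) : MvPolynomial σ (ZMod 2)) ^ 2 ^ (c + 1 + i + 1) =
      (∏ i, X (f i) ^ 2 ^ (c + i + 1)) ^ 2 := by
    rw [← prod_pow]
    refine prod_congr rfl fun i _ => ?_
    rw [← pow_mul, ← pow_succ, add_right_comm c 1]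
  have hshift (i : Fin r) : c + (i.succ : ℕ) + 1 = c + 1 + i + 1 := by
    rw [Fin.val_succ]
    omega
  rw [milnorTerm, hsq, Q_sq_mul, Q_prod_X, mul_sum]
  refine sum_congr rfl fun j _ => ?_
  rw [milnorTerm, Fin.image_cons_univ, compl_insert, Fin.prod_univ_succ]
  simp only [Fin.cons_zero, Fin.cons_succ, Fin.val_zero, add_zero, hshift, hsq]
  ring

theorem milnorComposite_prod_X (c r : ℕ) :
    milnorComposite σ c r (∏ j, X j) = ∑ e : Fin r ↪ σ, milnorTerm σ c e := by
  induction r generalizing c with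
  | zero => simp [milnorComposite, milnorTerm]
  | succ r ih =>
    rw [milnorComposite_succ, LinearMap.comp_apply, ih, map_sum, sum_embedding_fin_succ]
    exact sum_congr rfl fun e _ => Q_milnorTerm σ c e

theorem milnorTerm_zero_eq_prod_cons {r : ℕ} (f : Fin r → σ) (a : σ)
    (ha : (univ.image f)ᶜ = {a}) :
    milnorTerm σ 0 f = ∏ i : Fin (r + 1), X ((Fin.cons a f : Fin (r + 1) → σ) i) ^ 2 ^ (i : ℕ) := by
  simp [milnorTerm, ha, Fin.prod_univ_succ, mul_comm]

end Milnor

theorem milnor_composite_prod_eq_permanent_general (n : ℕ) :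
    ((List.ofFn fun k : Fin (n - 1) => Q (Fin n) (k : ℕ)).foldr (· ∘ₗ ·) LinearMap.id)
        (∏ j : Fin n, X j) =
      ∑ π : Equiv.Perm (Fin n), ∏ i : Fin n, (X (π i) : MvPolynomial (Fin n) (ZMod 2)) ^ (2 ^ (i : ℕ)) := by
  rcases n with _ | m
  · simp
  have hcomposite := milnorComposite_prod_X (Fin (m + 1)) 0 m
  simp only [milnorComposite, zero_add] at hcomposite
  rw [Nat.add_sub_cancel, hcomposite, ← (Equiv.embeddingEquivOfFinite _).sum_comp]
  simp only [Equiv.embeddingEquivOfFinite_apply, Function.Embedding.equivOfFiniteSelfEmbedding,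
    Equiv.ofBijective_apply]
  rw [sum_embedding_fin_succ fun f => ∏ i, X (f i) ^ 2 ^ (i : ℕ)]
  refine sum_congr rfl fun e _ => ?_
  obtain ⟨a, ha⟩ : ∃ a, (univ.image e)ᶜ = {a} :=
    card_eq_one.mp (by simp [card_compl, card_image_of_injective _ e.injective])
  rw [ha, sum_singleton, milnorTerm_zero_eq_prod_cons _ e a ha]

/-- Moore permanent formula for `(Q_0 ∘ ⋯ ∘ Q_{n-2}) (x₁⋯x_n)`. -/
theorem milnor_composite_prod_eq_permanent (n : ℕ) (hn : 1 ≤ n) :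
    ((List.ofFn fun k : Fin (n - 1) => Q (Fin n) (k : ℕ)).foldr (· ∘ₗ ·) LinearMap.id)
        (∏ j : Fin n, X j) =
      ∑ π : Equiv.Perm (Fin n), ∏ i : Fin n, (X (π i) : MvPolynomial (Fin n) (ZMod 2)) ^ (2 ^ (i : ℕ)) :=
  milnor_composite_prod_eq_permanent_general n
end

section
/- Let σ be a type and let f, g ∈ MvPolynomial σ (ZMod 2) be homogeneous of degrees d and e respectively. Then for every k ∈ ℕ, MvPolynomial.homogeneousComponent (d + e + k) (Sq (f * g)) = ∑_{i = 0}^{k} (MvPolynomial.homogeneousComponent (d + i) (Sq f)) * (MvPolynomial.homogeneousComponent (e + (k − i)) (Sq g)). (This is the Cartan formula Sq^k(fg) = ∑_{i+j=k} Sq^i f · Sq^j g in the polynomial model.) -/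
open MvPolynomial

/-- The total Steenrod square: the `𝔽₂`-algebra endomorphism sending
each variable `X j` to `X j + (X j)²`. -/
noncomputable def Sq (σ : Type*) :
    MvPolynomial σ (ZMod 2) →ₐ[ZMod 2] MvPolynomial σ (ZMod 2) :=
  MvPolynomial.aeval fun j => MvPolynomial.X j + (MvPolynomial.X j) ^ 2

/-!
Since `Sq` is multiplicative, `Sq^k (f g)` is the degree `d + e + k` component of
`Sq f * Sq g`, i.e. the sum over `i + j = d + e + k` of the degree `i` component of `Sq f`
times the degree `j` component of `Sq g`.
As `Sq (x^u) = x^u ∏ⱼ (1 + Xⱼ)^{uⱼ}`, the image under `Sq` of a form of degree `d` has no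
components below degree `d`; so only the terms with `d ≤ i` and `e ≤ j` survive.
-/

open Finset

namespace MvPolynomial

variable {σ R : Type*} [CommSemiring R]

attribute [local instance] gradedAlgebra in
theorem homogeneousComponent_mul (p q : MvPolynomial σ R) (n : ℕ) :
    homogeneousComponent n (p * q) =
      ∑ ij ∈ antidiagonal n, homogeneousComponent ij.1 p * homogeneousComponent ij.2 q := by
  simp only [← decomposition.decompose'_apply]
  change ((DirectSum.decompose (homogeneousSubmodule σ R) (p * q)) n : MvPolynomial σ R) = _
  rw [DirectSum.decompose_mul, DirectSum.coe_mul_apply_eq_sum_antidiagonal]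
  rfl

theorem homogeneousComponent_mul_eq_zero_of_lt {p : MvPolynomial σ R} {d m : ℕ}
    (hp : p.IsHomogeneous d) (hm : m < d) (q : MvPolynomial σ R) :
    homogeneousComponent m (p * q) = 0 := by
  rw [homogeneousComponent_mul]
  refine sum_eq_zero fun ij hij => ?_
  have : ij.1 ≠ d := by rw [HasAntidiagonal.mem_antidiagonal] at hij; omega
  rw [homogeneousComponent_of_mem hp, if_neg this, zero_mul]

theorem homogeneousComponent_mul_eq_sum_range {p q : MvPolynomial σ R} {d e : ℕ}
    (hp : ∀ m < d, homogeneousComponent m p = 0) (hq : ∀ m < e, homogeneousComponent m q = 0)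
    (k : ℕ) :
    homogeneousComponent (d + e + k) (p * q) =
      ∑ i ∈ range (k + 1),
        homogeneousComponent (d + i) p * homogeneousComponent (e + (k - i)) q := by
  rw [homogeneousComponent_mul, Nat.sum_antidiagonal_eq_sum_range_succ
      (fun i j => homogeneousComponent i p * homogeneousComponent j q), Nat.succ_eq_add_one,
    show d + e + k + 1 = d + (k + 1) + e by omega, sum_range_add, sum_range_add]
  have low :
      ∑ i ∈ range d, homogeneousComponent i p * homogeneousComponent (d + e + k - i) q = 0 :=
    sum_eq_zero fun i hi => by rw [hp i (mem_range.mp hi), zero_mul]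
  have high : ∑ i ∈ range e, homogeneousComponent (d + (k + 1) + i) p *
      homogeneousComponent (d + e + k - (d + (k + 1) + i)) q = 0 :=
    sum_eq_zero fun i hi => by rw [hq _ (by rw [mem_range] at hi; omega), mul_zero]
  rw [low, high, zero_add, add_zero]
  refine sum_congr rfl fun i hi => ?_
  rw [show d + e + k - (d + i) = e + (k - i) by rw [mem_range] at hi; omega]

end MvPolynomial

theorem Sq_monomial {σ : Type*} (u : σ →₀ ℕ) (c : ZMod 2) :
    Sq σ (monomial u c) = monomial u c * u.prod fun j n => (1 + X j) ^ n := by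
  rw [Sq, aeval_monomial, monomial_eq, algebraMap_eq, mul_assoc, ← Finsupp.prod_mul]
  congr 1
  refine Finsupp.prod_congr fun j _ => ?_
  rw [← mul_pow]
  ring

theorem homogeneousComponent_Sq_eq_zero_of_lt {σ : Type*} {d m : ℕ}
    {f : MvPolynomial σ (ZMod 2)} (hf : f.IsHomogeneous d) (hm : m < d) :
    homogeneousComponent m (Sq σ f) = 0 := by
  rw [f.as_sum, map_sum, map_sum]
  refine sum_eq_zero fun u hu => ?_
  have hu : u.degree = d := by
    rw [Finsupp.degree_eq_weight_one]
    exact hf (mem_support_iff.mp hu)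
  rw [Sq_monomial, homogeneousComponent_mul_eq_zero_of_lt (isHomogeneous_monomial _ hu) hm]

/-- Cartan formula: `Sq^k (f g) = ∑_{i + j = k} Sq^i f · Sq^j g`. -/
theorem cartan_formula (σ : Type*) (d e : ℕ) (f g : MvPolynomial σ (ZMod 2))
    (hf : f.IsHomogeneous d) (hg : g.IsHomogeneous e) (k : ℕ) :
    MvPolynomial.homogeneousComponent (d + e + k) (Sq σ (f * g)) =
      ∑ i ∈ Finset.range (k + 1),
        MvPolynomial.homogeneousComponent (d + i) (Sq σ f) *
          MvPolynomial.homogeneousComponent (e + (k - i)) (Sq σ g) := by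
  rw [map_mul]
  exact homogeneousComponent_mul_eq_sum_range
    (fun _ => homogeneousComponent_Sq_eq_zero_of_lt hf)
    (fun _ => homogeneousComponent_Sq_eq_zero_of_lt hg) k
end

section
/- For every type σ and every i ∈ ℕ, the composite Q_i ∘ Q_i of the i-th Milnor derivation with itself is the zero linear endomorphism of MvPolynomial σ (ZMod 2) (each Milnor primitive is a differential in characteristic 2). -/
open MvPolynomial

lemma Q_mul (σ : Type*) (i : ℕ) (p q : MvPolynomial σ (ZMod 2)) :
    Q σ i (p * q) = Q σ i p * q + p * Q σ i q := by
  simp [Q, Derivation.leibniz, smul_eq_mul, mul_comm, add_comm]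

lemma Q_X (σ : Type*) (i : ℕ) (j : σ) :
    Q σ i (X j) = (X j : MvPolynomial σ (ZMod 2)) ^ (2 ^ (i + 1)) := by
  simp [Q, mkDerivation_X]

lemma Q_X_pow (σ : Type*) (i : ℕ) (j : σ) :
    Q σ i ((X j : MvPolynomial σ (ZMod 2)) ^ (2 ^ (i + 1))) = 0 := by
  show ((MvPolynomial.mkDerivation (ZMod 2)
    fun j => (MvPolynomial.X j : MvPolynomial σ (ZMod 2)) ^ (2 ^ (i + 1)))) _ = 0
  rw [Derivation.leibniz_pow]
  have h2 : ((2 ^ (i + 1) : ℕ) : ZMod 2) = 0 := by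
    rw [Nat.cast_pow, show ((2 : ℕ) : ZMod 2) = 0 from by decide,
      zero_pow (Nat.succ_ne_zero i)]
  have h2' : ((2 ^ (i + 1) : ℕ) : MvPolynomial σ (ZMod 2)) = 0 := by
    rw [← map_natCast (C : ZMod 2 →+* MvPolynomial σ (ZMod 2)), h2, map_zero]
  simp [nsmul_eq_mul, h2']

/-- Each Milnor derivation squares to zero. -/
theorem milnor_derivation_comp_self_eq_zero (σ : Type*) (i : ℕ) :
    Q σ i ∘ₗ Q σ i = 0 := by
  apply LinearMap.ext
  intro p
  show Q σ i (Q σ i p) = 0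
  induction p using MvPolynomial.induction_on with
  | C a =>
    have : Q σ i (C a) = 0 := by
      show ((MvPolynomial.mkDerivation (ZMod 2)
        fun j => (MvPolynomial.X j : MvPolynomial σ (ZMod 2)) ^ (2 ^ (i + 1)))) _ = 0
      simp
    simp [this]
  | add p q hp hq => simp [map_add, hp, hq]
  | mul_X p n hp =>
    rw [Q_mul, Q_X, map_add, Q_mul, Q_mul, hp, Q_X, Q_X_pow]
    ring_nf
    simp [CharTwo.two_eq_zero]
end
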